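/- For every Lie subalgebra h ⊆ so(n), the Lie algebra g^h acts weakly irreducibly on ℝ^{n+4}: if W ⊆ ℝ^{n+4} is a linear subspace with X·W ⊆ W for every X ∈ g^h, and the restriction of the bilinear form η (with Gram matrix J) to W is nondegenerate, then W = 0 or W = ℝ^{n+4}. -/

import Mathlib

/-!
If every vector of `W` has vanishing `q`-components, the element with `X = w_e` maps `w ∈ W` to
`-|w_e|² p₁`, which is orthogonal to `W`; nondegeneracy forces `w_e = 0`, and then `w` itself is
orthogonal to `W`, so `W = 0`.

Otherwise take `w ∈ W` with `q`-components `(b₁, b₂) ≠ 0` and any `y ≠ 0` in `ℝⁿ`. The element with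
`X = b₁ y`, `Y = b₂ y` sends `w` to `(b₁² + b₂²) y` modulo `span{p₁, p₂}`; applying it twice gives
a multiple of `b₁ p₁ + b₂ p₂`, and the element with `c = 1` gives `-b₂ p₁ + b₁ p₂`. Hence
`p₁, p₂ ∈ W`, and then all of the middle block lies in `W`. Finally `-b₂ p₁ + b₁ p₂ ≠ 0`, so by
nondegeneracy some `w' ∈ W` pairs nontrivially with it, i.e. the `q`-components of `w` and `w'`
are independent; so `q₁, q₂ ∈ W` and `W` is everything.
-/

namespace HolPaper

open Matrix

attribute [local instance 100] LieRing.ofAssociativeRing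

def p1 (n : ℕ) : Fin (n + 4) := ⟨0, by omega⟩
def p2 (n : ℕ) : Fin (n + 4) := ⟨1, by omega⟩
def ehat {n : ℕ} (i : Fin n) : Fin (n + 4) := ⟨i.1 + 2, by have := i.isLt; omega⟩
def q1 (n : ℕ) : Fin (n + 4) := ⟨n + 2, by omega⟩
def q2 (n : ℕ) : Fin (n + 4) := ⟨n + 3, by omega⟩
def pp {n : ℕ} (k : Fin 2) : Fin (n + 4) := ⟨k.1, by have := k.isLt; omega⟩
def qq {n : ℕ} (k : Fin 2) : Fin (n + 4) := ⟨n + 2 + k.1, by have := k.isLt; omega⟩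

/-- The Gram matrix `J` of the bilinear form `η` of signature `(2, n+2)` in the basis
`p_1, p_2, e_1, …, e_n, q_1, q_2`. -/
def J (n : ℕ) : Matrix (Fin (n + 4)) (Fin (n + 4)) ℝ := fun a b =>
  (if (a = p1 n ∧ b = q1 n) ∨ (a = q1 n ∧ b = p1 n) then (1 : ℝ) else 0)
  + (if (a = p2 n ∧ b = q2 n) ∨ (a = q2 n ∧ b = p2 n) then (1 : ℝ) else 0)
  + (∑ i : Fin n, if a = ehat i ∧ b = ehat i then (1 : ℝ) else 0)

/-- `so(2, n+2) = { X : Xᵀ J + J X = 0 }`. -/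
def so2 (n : ℕ) : Set (Matrix (Fin (n + 4)) (Fin (n + 4)) ℝ) :=
  {X | Xᵀ * J n + J n * X = 0}

/-- The block matrix (blocks of sizes 2, n, 2) with rows of blocks
`(B, (−Xᵀ; −Yᵀ), ((0,−c),(c,0)))`, `(0, A, (X Y))`, `(0, 0, −Bᵀ)`. -/
def bform (n : ℕ) (B : Matrix (Fin 2) (Fin 2) ℝ) (A : Matrix (Fin n) (Fin n) ℝ)
    (X Y : Fin n → ℝ) (c : ℝ) : Matrix (Fin (n + 4)) (Fin (n + 4)) ℝ := fun a b =>
  (∑ k : Fin 2, ∑ l : Fin 2, if a = pp k ∧ b = pp l then B k l else 0)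
  + (∑ j : Fin n, if a = p1 n ∧ b = ehat j then -X j else 0)
  + (∑ j : Fin n, if a = p2 n ∧ b = ehat j then -Y j else 0)
  + (if a = p1 n ∧ b = q2 n then -c else 0)
  + (if a = p2 n ∧ b = q1 n then c else 0)
  + (∑ i : Fin n, ∑ j : Fin n, if a = ehat i ∧ b = ehat j then A i j else 0)
  + (∑ i : Fin n, if a = ehat i ∧ b = q1 n then X i else 0)
  + (∑ i : Fin n, if a = ehat i ∧ b = q2 n then Y i else 0)
  + (∑ k : Fin 2, ∑ l : Fin 2, if a = qq k ∧ b = qq l then -B l k else 0)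

/-- The isotropic plane `span{p_1, p_2} ⊂ ℝ^{n+4}`. -/
def plane (n : ℕ) : Submodule ℝ (Fin (n + 4) → ℝ) :=
  Submodule.span ℝ {Pi.single (p1 n) 1, Pi.single (p2 n) 1}

/-- The matrix of an element of `g^h` (blocks of sizes 1, 1, n, 1, 1) with data
`A ∈ h`, `X, Y ∈ ℝⁿ`, `c ∈ ℝ`. -/
def ghMat (n : ℕ) (A : Matrix (Fin n) (Fin n) ℝ) (X Y : Fin n → ℝ) (c : ℝ) :
    Matrix (Fin (n + 4)) (Fin (n + 4)) ℝ := fun a b =>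
  (∑ j : Fin n, if a = p1 n ∧ b = ehat j then -X j else 0)
  + (∑ j : Fin n, if a = p2 n ∧ b = ehat j then -Y j else 0)
  + (if a = p1 n ∧ b = q2 n then -c else 0)
  + (if a = p2 n ∧ b = q1 n then c else 0)
  + (∑ i : Fin n, ∑ j : Fin n, if a = ehat i ∧ b = ehat j then A i j else 0)
  + (∑ i : Fin n, if a = ehat i ∧ b = q1 n then X i else 0)
  + (∑ i : Fin n, if a = ehat i ∧ b = q2 n then Y i else 0)

/-- The set `g^h` associated to a set `h` of `n×n` matrices. -/
def gSet (n : ℕ) (h : Set (Matrix (Fin n) (Fin n) ℝ)) :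
    Set (Matrix (Fin (n + 4)) (Fin (n + 4)) ℝ) :=
  {M | ∃ A ∈ h, ∃ X Y : Fin n → ℝ, ∃ c : ℝ, M = ghMat n A X Y c}

/-- The bilinear form `η`. -/
def eta (n : ℕ) (v w : Fin (n + 4) → ℝ) : ℝ := v ⬝ᵥ (J n).mulVec w

variable {n : ℕ}

@[simp] lemma p1_ne_p2 : p1 n ≠ p2 n := by simp [p1, p2]
@[simp] lemma p1_ne_q1 : p1 n ≠ q1 n := by simp [p1, q1, Fin.ext_iff]
@[simp] lemma p1_ne_q2 : p1 n ≠ q2 n := by simp [p1, q2, Fin.ext_iff]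
@[simp] lemma p2_ne_q1 : p2 n ≠ q1 n := by simp [p2, q1, Fin.ext_iff]
@[simp] lemma p2_ne_q2 : p2 n ≠ q2 n := by simp [p2, q2, Fin.ext_iff]
@[simp] lemma q1_ne_q2 : q1 n ≠ q2 n := by simp [q1, q2, Fin.ext_iff]
@[simp] lemma ehat_ne_p1 (i : Fin n) : ehat i ≠ p1 n := by simp [ehat, p1, Fin.ext_iff]
@[simp] lemma ehat_ne_p2 (i : Fin n) : ehat i ≠ p2 n := by simp [ehat, p2, Fin.ext_iff]
@[simp] lemma ehat_ne_q1 (i : Fin n) : ehat i ≠ q1 n := by simp [ehat, q1, Fin.ext_iff]; omega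
@[simp] lemma ehat_ne_q2 (i : Fin n) : ehat i ≠ q2 n := by simp [ehat, q2, Fin.ext_iff]; omega
@[simp] lemma p2_ne_p1 : p2 n ≠ p1 n := p1_ne_p2.symm
@[simp] lemma q1_ne_p1 : q1 n ≠ p1 n := p1_ne_q1.symm
@[simp] lemma q2_ne_p1 : q2 n ≠ p1 n := p1_ne_q2.symm
@[simp] lemma q1_ne_p2 : q1 n ≠ p2 n := p2_ne_q1.symm
@[simp] lemma q2_ne_p2 : q2 n ≠ p2 n := p2_ne_q2.symm
@[simp] lemma q2_ne_q1 : q2 n ≠ q1 n := q1_ne_q2.symm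
@[simp] lemma p1_ne_ehat (i : Fin n) : p1 n ≠ ehat i := (ehat_ne_p1 i).symm
@[simp] lemma p2_ne_ehat (i : Fin n) : p2 n ≠ ehat i := (ehat_ne_p2 i).symm
@[simp] lemma q1_ne_ehat (i : Fin n) : q1 n ≠ ehat i := (ehat_ne_q1 i).symm
@[simp] lemma q2_ne_ehat (i : Fin n) : q2 n ≠ ehat i := (ehat_ne_q2 i).symm
@[simp] lemma ehat_inj {i j : Fin n} : ehat i = ehat j ↔ i = j := by simp [ehat, Fin.ext_iff]

lemma eq_p1_or_eq_p2_or_eq_ehat_or_eq_q1_or_eq_q2 (a : Fin (n + 4)) :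
    a = p1 n ∨ a = p2 n ∨ (∃ i, a = ehat i) ∨ a = q1 n ∨ a = q2 n := by
  obtain ⟨a, ha⟩ := a
  simp only [p1, p2, ehat, q1, q2, Fin.ext_iff]
  by_cases h : 2 ≤ a ∧ a < n + 2
  · exact Or.inr <| Or.inr <| Or.inl ⟨⟨a - 2, by omega⟩, by simp; omega⟩
  · omega

def ofBlocks (a₁ a₂ : ℝ) (z : Fin n → ℝ) (b₁ b₂ : ℝ) : Fin (n + 4) → ℝ :=
  Pi.single (p1 n) a₁ + Pi.single (p2 n) a₂ + ∑ i, Pi.single (ehat i) (z i)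
    + Pi.single (q1 n) b₁ + Pi.single (q2 n) b₂

section ofBlocks

variable {a₁ a₂ b₁ b₂ : ℝ} {z : Fin n → ℝ}

@[simp] lemma ofBlocks_p1 : ofBlocks a₁ a₂ z b₁ b₂ (p1 n) = a₁ := by
  simp [ofBlocks]
@[simp] lemma ofBlocks_p2 : ofBlocks a₁ a₂ z b₁ b₂ (p2 n) = a₂ := by
  simp [ofBlocks]
@[simp] lemma ofBlocks_ehat (i : Fin n) : ofBlocks a₁ a₂ z b₁ b₂ (ehat i) = z i := by
  simp [ofBlocks, Pi.single_apply]
@[simp] lemma ofBlocks_q1 : ofBlocks a₁ a₂ z b₁ b₂ (q1 n) = b₁ := by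
  simp [ofBlocks]
@[simp] lemma ofBlocks_q2 : ofBlocks a₁ a₂ z b₁ b₂ (q2 n) = b₂ := by
  simp [ofBlocks]

lemma ofBlocks_ext {v w : Fin (n + 4) → ℝ} (h₁ : v (p1 n) = w (p1 n)) (h₂ : v (p2 n) = w (p2 n))
    (he : ∀ i, v (ehat i) = w (ehat i)) (h₃ : v (q1 n) = w (q1 n)) (h₄ : v (q2 n) = w (q2 n)) :
    v = w := by
  funext a
  rcases eq_p1_or_eq_p2_or_eq_ehat_or_eq_q1_or_eq_q2 a with rfl | rfl | ⟨i, rfl⟩ | rfl | rfl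
  exacts [h₁, h₂, he i, h₃, h₄]

lemma eq_ofBlocks (v : Fin (n + 4) → ℝ) :
    v = ofBlocks (v (p1 n)) (v (p2 n)) (fun i => v (ehat i)) (v (q1 n)) (v (q2 n)) :=
  ofBlocks_ext (by simp) (by simp) (by simp) (by simp) (by simp)

lemma ofBlocks_add (a₁' a₂' b₁' b₂' : ℝ) (z' : Fin n → ℝ) :
    ofBlocks a₁ a₂ z b₁ b₂ + ofBlocks a₁' a₂' z' b₁' b₂'
      = ofBlocks (a₁ + a₁') (a₂ + a₂') (z + z') (b₁ + b₁') (b₂ + b₂') :=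
  ofBlocks_ext (by simp) (by simp) (by simp) (by simp) (by simp)

lemma smul_ofBlocks (r : ℝ) :
    r • ofBlocks a₁ a₂ z b₁ b₂ = ofBlocks (r * a₁) (r * a₂) (r • z) (r * b₁) (r * b₂) :=
  ofBlocks_ext (by simp) (by simp) (by simp) (by simp) (by simp)

lemma dotProduct_ofBlocks (v : Fin (n + 4) → ℝ) :
    v ⬝ᵥ ofBlocks a₁ a₂ z b₁ b₂
      = v (p1 n) * a₁ + v (p2 n) * a₂ + ∑ i, v (ehat i) * z i + v (q1 n) * b₁ + v (q2 n) * b₂ := by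
  simp [ofBlocks, dotProduct_add, dotProduct_sum, dotProduct_single]

end ofBlocks

lemma mulVec_apply_eq {M : Matrix (Fin (n + 4)) (Fin (n + 4)) ℝ} (v : Fin (n + 4) → ℝ)
    (a : Fin (n + 4)) :
    (M *ᵥ v) a = M a (p1 n) * v (p1 n) + M a (p2 n) * v (p2 n) + ∑ i, M a (ehat i) * v (ehat i)
      + M a (q1 n) * v (q1 n) + M a (q2 n) * v (q2 n) := by
  rw [mulVec, eq_ofBlocks v, dotProduct_ofBlocks]
  simp

lemma J_mulVec (v : Fin (n + 4) → ℝ) :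
    J n *ᵥ v = ofBlocks (v (q1 n)) (v (q2 n)) (fun i => v (ehat i)) (v (p1 n)) (v (p2 n)) :=
  ofBlocks_ext (by simp [mulVec_apply_eq, J]) (by simp [mulVec_apply_eq, J])
    (by simp [mulVec_apply_eq, J, ite_and]) (by simp [mulVec_apply_eq, J])
    (by simp [mulVec_apply_eq, J])

lemma eta_eq (v w : Fin (n + 4) → ℝ) :
    eta n v w = v (p1 n) * w (q1 n) + v (p2 n) * w (q2 n) + ∑ i, v (ehat i) * w (ehat i)
      + v (q1 n) * w (p1 n) + v (q2 n) * w (p2 n) := by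
  rw [eta, J_mulVec, dotProduct_ofBlocks]

lemma ghMat_mulVec (A : Matrix (Fin n) (Fin n) ℝ) (X Y : Fin n → ℝ) (c a₁ a₂ b₁ b₂ : ℝ)
    (z : Fin n → ℝ) :
    ghMat n A X Y c *ᵥ ofBlocks a₁ a₂ z b₁ b₂
      = ofBlocks (-(X ⬝ᵥ z) - c * b₂) (-(Y ⬝ᵥ z) + c * b₁) (A *ᵥ z + b₁ • X + b₂ • Y) 0 0 :=
  ofBlocks_ext (by simp [mulVec_apply_eq, ghMat, dotProduct, sub_eq_add_neg])
    (by simp [mulVec_apply_eq, ghMat, dotProduct])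
    (fun i => by simp only [mulVec_apply_eq]; simp [ghMat, ite_and, mulVec, dotProduct, mul_comm])
    (by simp [mulVec_apply_eq, ghMat]) (by simp [mulVec_apply_eq, ghMat])

lemma ofBlocks_eq_p_combination (a₁ a₂ : ℝ) :
    ofBlocks a₁ a₂ 0 0 0 = a₁ • Pi.single (p1 n) 1 + a₂ • Pi.single (p2 n) 1 :=
  ofBlocks_ext (by simp) (by simp) (by simp) (by simp) (by simp)

lemma ofBlocks_eq_q_combination (b₁ b₂ : ℝ) :
    ofBlocks 0 0 0 b₁ b₂ = b₁ • Pi.single (q1 n) 1 + b₂ • Pi.single (q2 n) 1 :=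
  ofBlocks_ext (by simp) (by simp) (by simp) (by simp) (by simp)

lemma ofBlocks_mem_plane (a₁ a₂ : ℝ) : ofBlocks a₁ a₂ 0 0 0 ∈ plane n := by
  rw [ofBlocks_eq_p_combination]
  exact add_mem (Submodule.smul_mem _ _ (Submodule.subset_span (by simp)))
    (Submodule.smul_mem _ _ (Submodule.subset_span (by simp)))

lemma ghMat_mulVec_ofBlocks_smul (b₁ b₂ a₁ a₂ : ℝ) (y z : Fin n → ℝ) :
    ghMat n 0 (b₁ • y) (b₂ • y) 0 *ᵥ ofBlocks a₁ a₂ z b₁ b₂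
      = ofBlocks (-(b₁ • y ⬝ᵥ z)) (-(b₂ • y ⬝ᵥ z)) ((b₁ ^ 2 + b₂ ^ 2) • y) 0 0 := by
  rw [ghMat_mulVec]
  congr 1 <;> simp [smul_smul, ← add_smul, sq]

lemma mem_and_mem_of_det_ne_zero {K M : Type*} [Field K] [AddCommGroup M] [Module K M]
    (W : Submodule K M) {x y : M} {a b c d : K} (hdet : a * d - b * c ≠ 0)
    (h₁ : a • x + b • y ∈ W) (h₂ : c • x + d • y ∈ W) : x ∈ W ∧ y ∈ W := by
  constructor <;> rw [← W.smul_mem_iff hdet]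
  · convert W.sub_mem (W.smul_mem d h₁) (W.smul_mem b h₂) using 1
    module
  · convert W.sub_mem (W.smul_mem a h₂) (W.smul_mem c h₁) using 1
    module

section InvariantSubspace

variable {W : Submodule ℝ (Fin (n + 4) → ℝ)}

lemma ofBlocks_mem_iff_of_plane_le (hP : plane n ≤ W) {a₁ a₂ b₁ b₂ : ℝ} {z : Fin n → ℝ} :
    ofBlocks a₁ a₂ z b₁ b₂ ∈ W ↔ ofBlocks 0 0 z b₁ b₂ ∈ W := by
  have hsplit : ofBlocks a₁ a₂ z b₁ b₂ = ofBlocks a₁ a₂ 0 0 0 + ofBlocks 0 0 z b₁ b₂ := by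
    simp [ofBlocks_add]
  rw [hsplit, Submodule.add_mem_iff_right _ (hP (ofBlocks_mem_plane a₁ a₂))]

lemma eq_bot_of_forall_q_eq_zero
    (hinv : ∀ (X Y : Fin n → ℝ) (c : ℝ), ∀ w ∈ W, ghMat n 0 X Y c *ᵥ w ∈ W)
    (hnondeg : ∀ w ∈ W, (∀ w' ∈ W, eta n w w' = 0) → w = 0)
    (hq : ∀ w ∈ W, w (q1 n) = 0 ∧ w (q2 n) = 0) : W = ⊥ := by
  have hperp : ∀ a₁ a₂ : ℝ, ofBlocks a₁ a₂ 0 0 0 ∈ W → ofBlocks a₁ a₂ 0 0 0 = 0 :=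
    fun a₁ a₂ hmem => hnondeg _ hmem fun w' hw' => by simp [eta_eq, hq w' hw']
  rw [Submodule.eq_bot_iff]
  intro v hv
  obtain ⟨hv₁, hv₂⟩ := hq v hv
  rw [eq_ofBlocks v, hv₁, hv₂] at hv ⊢
  set z : Fin n → ℝ := fun i => v (ehat i)
  have hz : z = 0 := by
    have hN := hinv z 0 0 _ hv
    rw [ghMat_mulVec] at hN
    have hzz := congrFun (hperp _ _ (by simpa using hN)) (p1 n)
    rw [ofBlocks_p1, Pi.zero_apply, neg_eq_zero] at hzz
    exact dotProduct_self_eq_zero.mp hzz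
  rw [hz] at hv ⊢
  exact hperp _ _ hv

lemma plane_le_of_ofBlocks_mem (hn : 1 ≤ n)
    (hinv : ∀ (X Y : Fin n → ℝ) (c : ℝ), ∀ w ∈ W, ghMat n 0 X Y c *ᵥ w ∈ W)
    {a₁ a₂ b₁ b₂ : ℝ} {z : Fin n → ℝ} (hw : ofBlocks a₁ a₂ z b₁ b₂ ∈ W)
    (hb : b₁ ≠ 0 ∨ b₂ ≠ 0) : plane n ≤ W := by
  have hs : b₁ ^ 2 + b₂ ^ 2 ≠ 0 := by rcases hb with hb | hb <;> positivity
  set y : Fin n → ℝ := 1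
  have hy : y ⬝ᵥ y ≠ 0 := by simp [y]; omega
  have hN := hinv (b₁ • y) (b₂ • y) 0 _ (hinv (b₁ • y) (b₂ • y) 0 _ hw)
  rw [ghMat_mulVec_ofBlocks_smul, ghMat_mulVec] at hN
  have hpos : ofBlocks b₁ b₂ 0 0 0 ∈ W := by
    rw [← W.smul_mem_iff (neg_ne_zero.mpr (mul_ne_zero hs hy))]
    convert hN using 1
    rw [smul_ofBlocks]
    congr 1 <;> simp [smul_smul] <;> ring
  have hrot : ofBlocks (-b₂) b₁ 0 0 0 ∈ W := by
    simpa [ghMat_mulVec] using hinv 0 0 1 _ hw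
  rw [ofBlocks_eq_p_combination] at hpos hrot
  obtain ⟨h₁, h₂⟩ := mem_and_mem_of_det_ne_zero W (by convert hs using 1; ring) hpos hrot
  rw [plane, Submodule.span_le, Set.insert_subset_iff, Set.singleton_subset_iff]
  exact ⟨h₁, h₂⟩

lemma ofBlocks_e_mem_of_plane_le
    (hinv : ∀ (X Y : Fin n → ℝ) (c : ℝ), ∀ w ∈ W, ghMat n 0 X Y c *ᵥ w ∈ W) (hP : plane n ≤ W)
    {a₁ a₂ b₁ b₂ : ℝ} {z : Fin n → ℝ} (hw : ofBlocks a₁ a₂ z b₁ b₂ ∈ W)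
    (hb : b₁ ≠ 0 ∨ b₂ ≠ 0) (y : Fin n → ℝ) : ofBlocks 0 0 y 0 0 ∈ W := by
  have hs : b₁ ^ 2 + b₂ ^ 2 ≠ 0 := by rcases hb with hb | hb <;> positivity
  have hN := hinv (b₁ • y) (b₂ • y) 0 _ hw
  rw [ghMat_mulVec_ofBlocks_smul, ofBlocks_mem_iff_of_plane_le hP] at hN
  rw [← W.smul_mem_iff hs, smul_ofBlocks]
  simpa using hN

lemma ofBlocks_mem_iff_of_plane_le_of_e_mem (hP : plane n ≤ W)
    (hE : ∀ y : Fin n → ℝ, ofBlocks 0 0 y 0 0 ∈ W) {a₁ a₂ b₁ b₂ : ℝ} {z : Fin n → ℝ} :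
    ofBlocks a₁ a₂ z b₁ b₂ ∈ W ↔ b₁ • Pi.single (q1 n) 1 + b₂ • Pi.single (q2 n) 1 ∈ W := by
  have hsplit : ofBlocks 0 0 z b₁ b₂ = ofBlocks 0 0 z 0 0 + ofBlocks 0 0 0 b₁ b₂ := by
    simp [ofBlocks_add]
  rw [ofBlocks_mem_iff_of_plane_le hP, hsplit, Submodule.add_mem_iff_right _ (hE z),
    ofBlocks_eq_q_combination]

lemma eq_top_of_ofBlocks_mem (hnondeg : ∀ w ∈ W, (∀ w' ∈ W, eta n w w' = 0) → w = 0)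
    (hP : plane n ≤ W) (hE : ∀ y : Fin n → ℝ, ofBlocks 0 0 y 0 0 ∈ W)
    {a₁ a₂ b₁ b₂ : ℝ} {z : Fin n → ℝ} (hw : ofBlocks a₁ a₂ z b₁ b₂ ∈ W)
    (hb : b₁ ≠ 0 ∨ b₂ ≠ 0) : W = ⊤ := by
  obtain ⟨w', hw', hpair⟩ : ∃ w' ∈ W, eta n (ofBlocks (-b₂) b₁ 0 0 0) w' ≠ 0 := by
    by_contra! hperp
    have h0 := hnondeg _ (hP (ofBlocks_mem_plane _ _)) hperp
    rcases hb with hb | hb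
    · exact hb (by simpa using congrFun h0 (p2 n))
    · exact hb (by simpa using congrFun h0 (p1 n))
  rw [eq_ofBlocks w', ofBlocks_mem_iff_of_plane_le_of_e_mem hP hE] at hw'
  rw [ofBlocks_mem_iff_of_plane_le_of_e_mem hP hE] at hw
  obtain ⟨hq₁, hq₂⟩ := mem_and_mem_of_det_ne_zero W
    (by convert hpair using 1; simp [eta_eq]; ring) hw hw'
  rw [Submodule.eq_top_iff']
  intro v
  rw [eq_ofBlocks v, ofBlocks_mem_iff_of_plane_le_of_e_mem hP hE]
  exact add_mem (W.smul_mem _ hq₁) (W.smul_mem _ hq₂)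

end InvariantSubspace

theorem statement2_general (n : ℕ) (hn : 1 ≤ n) (h : LieSubalgebra ℝ (Matrix (Fin n) (Fin n) ℝ))
    (W : Submodule ℝ (Fin (n + 4) → ℝ))
    (hinv : ∀ M ∈ gSet n ↑h, ∀ w ∈ W, M.mulVec w ∈ W)
    (hnondeg : ∀ w ∈ W, (∀ w' ∈ W, eta n w w' = 0) → w = 0) :
    W = ⊥ ∨ W = ⊤ := by
  have hinv₀ : ∀ (X Y : Fin n → ℝ) (c : ℝ), ∀ w ∈ W, ghMat n 0 X Y c *ᵥ w ∈ W :=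
    fun X Y c => hinv _ ⟨0, h.zero_mem, X, Y, c, rfl⟩
  by_cases hq : ∃ w ∈ W, w (q1 n) ≠ 0 ∨ w (q2 n) ≠ 0
  · obtain ⟨w, hw, hb⟩ := hq
    rw [eq_ofBlocks w] at hw
    have hP := plane_le_of_ofBlocks_mem hn hinv₀ hw hb
    have hE := ofBlocks_e_mem_of_plane_le hinv₀ hP hw hb
    exact Or.inr (eq_top_of_ofBlocks_mem hnondeg hP hE hw hb)
  · push Not at hq
    exact Or.inl (eq_bot_of_forall_q_eq_zero hinv₀ hnondeg hq)

/-- For every Lie subalgebra `h ⊆ so(n)`, the Lie algebra `g^h` acts weakly irreducibly on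
`ℝ^{n+4}`: every `g^h`-invariant subspace on which `η` is nondegenerate is `0` or everything. -/
theorem statement2 (n : ℕ) (hn : 1 ≤ n) (h : LieSubalgebra ℝ (Matrix (Fin n) (Fin n) ℝ))
    (hskew : ∀ A ∈ h, Aᵀ = -A)
    (W : Submodule ℝ (Fin (n + 4) → ℝ))
    (hinv : ∀ M ∈ gSet n ↑h, ∀ w ∈ W, M.mulVec w ∈ W)
    (hnondeg : ∀ w ∈ W, (∀ w' ∈ W, eta n w w' = 0) → w = 0) :
    W = ⊥ ∨ W = ⊤ :=
  statement2_general n hn h W hinv hnondeg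

end HolPaper
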